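/- arXiv:2111.06008 — 4 statements merged into one kernel-verified Lean document; each statement's English description precedes it below -/
import Mathlib

section
/- (Markov chain tree theorem) Let Q be the transition matrix of an n-state ergodic Markov chain with all entries strictly positive. For each j define Σ_j = Σ_{T ∈ 𝒯_j} Π_{(a,b) ∈ E(T)} Q[a,b], where 𝒯_j is the set of directed trees on {1,...,n} rooted at j, and let Σ = Σ_1 + ... + Σ_n. Then the vector π with π[j] = Σ_j/Σ is a stationary distribution of Q, i.e., π^T Q = π^T. -/
open scoped Classical

/-- A directed tree on `Fin n` rooted at `j`, encoded by the "parent" function `f`. -/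
def IsRootedTree {n : ℕ} (j : Fin n) (f : Fin n → Fin n) : Prop :=
  f j = j ∧ ∀ v : Fin n, ∃ k : ℕ, f^[k] v = j

/-!
Weight a map `g : Fin n → Fin n` by `∏ v, Q v (g v)`; a tree rooted at `j` is its parent map
with the loop `j ↦ j`, which carries no weight. Both sides of `∑ j, Σ_j Q[j,k] = Σ_k` are the
total weight of the maps in which every vertex reaches `k` in at least one step, i.e. whose
functional graph is one cycle through `k` with trees hanging off it. On the left, closing a tree
rooted at `j` by the edge `j → k` produces each such map exactly once, `j` being recovered as the
predecessor of `k` on the cycle. On the right, replacing the loop at the root `k` by an edge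
`k → b` produces each one exactly once, and `Q[k,b]` sums to `1` over `b`. The star tree makes
every `Σ_j` positive, so normalising gives a stationary distribution.
-/

open Finset Function

namespace Function

variable {α : Type*}

/-- The functional graph of `g` is connected and `k` lies on its unique cycle. -/
def IsUnicyclicThrough (k : α) (g : α → α) : Prop :=
  ∀ v, ∃ m, g^[m + 1] v = k

theorem IsUnicyclicThrough.apply_self {g : α → α} {j : α} (h : IsUnicyclicThrough j g) :
    IsUnicyclicThrough (g j) g := fun v => by
  obtain ⟨m, hm⟩ := h v
  exact ⟨m + 1, by rw [iterate_succ_apply', hm]⟩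

theorem IsUnicyclicThrough.mem_periodicPts {g : α → α} {k : α} (h : IsUnicyclicThrough k g) :
    k ∈ periodicPts g := by
  obtain ⟨m, hm⟩ := h k
  exact ⟨m + 1, m.succ_pos, hm⟩

theorem exists_iterate_update_eq [DecidableEq α] {g : α → α} {j v : α} (a : α)
    (h : ∃ s, g^[s] v = j) : ∃ m, (update g j a)^[m] v = j := by
  obtain ⟨s, hs⟩ := h
  induction s generalizing v with
  | zero => exact ⟨0, hs⟩
  | succ s ih =>
    by_cases hv : v = j
    · exact ⟨0, hv⟩
    · obtain ⟨m, hm⟩ := ih (v := g v) hs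
      exact ⟨m + 1, by rwa [iterate_succ_apply, update_of_ne hv]⟩

/-- Junk (`= k`) unless `k` is periodic. -/
noncomputable def cyclePred (g : α → α) (k : α) : α :=
  g^[minimalPeriod g k - 1] k

theorem apply_cyclePred {g : α → α} {k : α} (hk : k ∈ periodicPts g) :
    g (cyclePred g k) = k := by
  rw [cyclePred, ← iterate_succ_apply' g, Nat.succ_eq_add_one,
    Nat.sub_add_cancel (minimalPeriod_pos_of_mem_periodicPts hk), iterate_minimalPeriod]

theorem eq_cyclePred {g : α → α} {j k : α} {a : ℕ} (hj : g^[a] k = j) (hgj : g j = k) :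
    j = cyclePred g k := by
  have hper : IsPeriodicPt g (a + 1) k := by
    rw [IsPeriodicPt, IsFixedPt, iterate_succ_apply', hj, hgj]
  have hpos := hper.minimalPeriod_pos a.succ_pos
  obtain ⟨c, hc⟩ := hper.minimalPeriod_dvd
  obtain ⟨c, rfl⟩ : ∃ c', c = c' + 1 := Nat.exists_eq_succ_of_ne_zero (by rintro rfl; simp at hc)
  have hmod : a % minimalPeriod g k = minimalPeriod g k - 1 := by
    rw [show a = minimalPeriod g k - 1 + minimalPeriod g k * c by rw [mul_add_one] at hc; omega,
      Nat.add_mul_mod_self_left, Nat.mod_eq_of_lt (Nat.sub_lt hpos one_pos)]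
  rw [cyclePred, ← hmod, iterate_mod_minimalPeriod_eq, hj]

end Function

theorem Finset.prod_filter_ne_mul_eq_prod_update {ι M : Type*} [Fintype ι] [DecidableEq ι]
    [CommMonoid M] (Q : ι → ι → M) (f : ι → ι) (j b : ι) :
    (∏ v ∈ univ.filter (fun v => v ≠ j), Q v (f v)) * Q j b = ∏ v, Q v (update f j b v) := by
  rw [filter_ne', ← mul_prod_erase univ _ (mem_univ j), update_self, mul_comm]
  congr 1
  exact prod_congr rfl fun v hv => by rw [update_of_ne (ne_of_mem_erase hv)]

namespace IsRootedTree

variable {n : ℕ} {j : Fin n} {f : Fin n → Fin n}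

theorem const (j : Fin n) : IsRootedTree j fun _ => j :=
  ⟨rfl, fun _ => ⟨1, rfl⟩⟩

theorem isUnicyclicThrough_update (hf : IsRootedTree j f) (b : Fin n) :
    IsUnicyclicThrough j (update f j b) := fun v => by
  obtain ⟨m, hm⟩ := exists_iterate_update_eq b (hf.2 (update f j b v))
  exact ⟨m, by rwa [iterate_succ_apply]⟩

theorem update_update_self (hf : IsRootedTree j f) (b : Fin n) :
    update (update f j b) j j = f := by
  rw [update_idem, update_eq_self_iff, hf.1]

theorem eq_cyclePred_update (hf : IsRootedTree j f) (k : Fin n) :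
    j = cyclePred (update f j k) k := by
  obtain ⟨a, ha⟩ := exists_iterate_update_eq k (hf.2 k)
  exact eq_cyclePred ha (update_self j k f)

end IsRootedTree

theorem Function.IsUnicyclicThrough.isRootedTree_update_self {n : ℕ} {j k : Fin n}
    {g : Fin n → Fin n} (hg : IsUnicyclicThrough k g) {t : ℕ} (hkj : g^[t] k = j) :
    IsRootedTree j (update g j j) := by
  refine ⟨update_self j j g, fun v => exists_iterate_update_eq j ?_⟩
  obtain ⟨m, hm⟩ := hg v
  exact ⟨t + (m + 1), by rw [iterate_add_apply, hm, hkj]⟩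

section TreeSums

variable {n : ℕ} (Q : Matrix (Fin n) (Fin n) ℝ)

noncomputable def rootedTreeSum (j : Fin n) : ℝ :=
  ∑ f : Fin n → Fin n,
    if IsRootedTree j f then ∏ v ∈ univ.filter (fun v => v ≠ j), Q v (f v) else 0

noncomputable def unicyclicSum (k : Fin n) : ℝ :=
  ∑ g ∈ univ.filter (IsUnicyclicThrough k), ∏ v, Q v (g v)

theorem rootedTreeSum_pos (hpos : ∀ a b, 0 < Q a b) (j : Fin n) : 0 < rootedTreeSum Q j := by
  refine sum_pos' (fun f _ => ?_) ⟨fun _ => j, mem_univ _, ?_⟩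
  · split_ifs
    exacts [prod_nonneg fun v _ => (hpos v (f v)).le, le_rfl]
  · rw [if_pos (IsRootedTree.const j)]
    exact prod_pos fun v _ => hpos v j

theorem sum_rootedTreeSum_mul (k : Fin n) :
    ∑ j, rootedTreeSum Q j * Q j k = unicyclicSum Q k := by
  calc ∑ j, rootedTreeSum Q j * Q j k
      = ∑ p ∈ univ.filter (fun p : Fin n × (Fin n → Fin n) => IsRootedTree p.1 p.2),
          ∏ v, Q v (update p.2 p.1 k v) := by
        rw [sum_filter, Fintype.sum_prod_type]
        simp only [rootedTreeSum, sum_mul, ite_mul, zero_mul,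
          prod_filter_ne_mul_eq_prod_update (Q := Q)]
    _ = unicyclicSum Q k := by
      refine sum_nbij' (fun p => update p.2 p.1 k)
        (fun g => (cyclePred g k, update g (cyclePred g k) (cyclePred g k))) ?_ ?_ ?_ ?_
        (fun _ _ => rfl)
      · rintro ⟨j, f⟩ hf
        rw [mem_filter_univ] at hf ⊢
        simpa only [update_self] using (hf.isUnicyclicThrough_update k).apply_self
      · intro g hg
        rw [mem_filter_univ] at hg ⊢
        exact hg.isRootedTree_update_self rfl
      · rintro ⟨j, f⟩ hf
        rw [mem_filter_univ] at hf
        rw [← hf.eq_cyclePred_update k, hf.update_update_self]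
      · intro g hg
        rw [mem_filter_univ] at hg
        rw [update_idem, update_eq_self_iff, apply_cyclePred hg.mem_periodicPts]

theorem rootedTreeSum_eq_unicyclicSum (hrow : ∀ a, ∑ b, Q a b = 1) (k : Fin n) :
    rootedTreeSum Q k = unicyclicSum Q k := by
  calc rootedTreeSum Q k
      = ∑ p ∈ univ.filter (fun p : (Fin n → Fin n) × Fin n => IsRootedTree k p.1),
          ∏ v, Q v (update p.1 k p.2 v) := by
        rw [← mul_one (rootedTreeSum Q k), ← hrow k, sum_filter, Fintype.sum_prod_type]
        simp only [rootedTreeSum, sum_mul_sum, ite_mul, zero_mul,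
          prod_filter_ne_mul_eq_prod_update (Q := Q)]
    _ = unicyclicSum Q k := by
      refine sum_nbij' (fun p => update p.1 k p.2) (fun g => (update g k k, g k)) ?_ ?_ ?_ ?_
        (fun _ _ => rfl)
      · rintro ⟨f, b⟩ hf
        rw [mem_filter_univ] at hf ⊢
        exact hf.isUnicyclicThrough_update b
      · intro g hg
        rw [mem_filter_univ] at hg ⊢
        exact hg.isRootedTree_update_self (t := 0) rfl
      · rintro ⟨f, b⟩ hf
        rw [mem_filter_univ] at hf
        exact Prod.ext (hf.update_update_self b) (update_self k b f)
      · intro g _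
        rw [update_idem, update_eq_self]

end TreeSums

/-- **Markov chain tree theorem.** For an `n`-state Markov chain with row-stochastic
transition matrix `Q` having strictly positive entries, the vector
`π j = Σ_j / Σ`, where `Σ_j` is the sum over directed trees rooted at `j` of the
product of `Q`-entries along the tree's edges and `Σ = Σ_1 + ⋯ + Σ_n`, is a
stationary distribution of `Q`: `πᵀ Q = πᵀ`. -/
theorem markov_chain_tree_theorem (n : ℕ) (hn : 1 ≤ n)
    (Q : Matrix (Fin n) (Fin n) ℝ)
    (hpos : ∀ a b, 0 < Q a b) (hrow : ∀ a, ∑ b, Q a b = 1) :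
    let Sig : Fin n → ℝ := fun j =>
      ∑ f : Fin n → Fin n,
        if IsRootedTree j f then ∏ v ∈ Finset.univ.filter (fun v => v ≠ j), Q v (f v) else 0
    let π : Fin n → ℝ := fun j => Sig j / ∑ j', Sig j'
    (∀ j, 0 ≤ π j) ∧ (∑ j, π j = 1) ∧ (∀ k, ∑ j, π j * Q j k = π k) := by
  intro Sig π
  have hSig_pos : ∀ j, 0 < Sig j := rootedTreeSum_pos Q hpos
  have hstat : ∀ k, ∑ j, Sig j * Q j k = Sig k := fun k =>
    (sum_rootedTreeSum_mul Q k).trans (rootedTreeSum_eq_unicyclicSum Q hrow k).symm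
  have : Nonempty (Fin n) := ⟨⟨0, hn⟩⟩
  have hS : 0 < ∑ j, Sig j := sum_pos (fun j _ => hSig_pos j) univ_nonempty
  refine ⟨fun j => div_nonneg (hSig_pos j).le hS.le, by rw [← sum_div, div_self hS.ne'],
    fun k => ?_⟩
  calc ∑ j, π j * Q j k = (∑ j, Sig j * Q j k) / ∑ j, Sig j := by
        simp only [π, div_mul_eq_mul_div, sum_div]
    _ = π k := by rw [hstat]
end

section
/- If q, q' ∈ Δ^n have strictly positive entries and are ζ-multiplicatively close, i.e., max{‖q/q'‖_∞, ‖q'/q‖_∞} ≤ 1 + ζ, then for any z ∈ R^n: (1 - ζ) Var_q(z) ≤ Var_{q'}(z) ≤ (1 + ζ) Var_q(z). -/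
/-!
`Var_q(z) = min_c ∑ⱼ q j (z j - c)²`. Taking `c` to be the `q`-mean of `z` and using the entrywise
bound `q' ≤ (1 + ζ) q` gives `Var_{q'}(z) ≤ (1 + ζ) Var_q(z)`. The symmetric bound
`Var_q(z) ≤ (1 + ζ) Var_{q'}(z)` gives the lower estimate, since `(1 - ζ)(1 + ζ) ≤ 1`.
-/

/-- The variance of `z` under the distribution `q`. -/
noncomputable def varD {n : ℕ} (q z : Fin n → ℝ) : ℝ :=
  ∑ j, q j * (z j - ∑ k, q k * z k) ^ 2

lemma varD_nonneg {n : ℕ} {q : Fin n → ℝ} (hq : ∀ j, 0 ≤ q j) (z : Fin n → ℝ) :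
    0 ≤ varD q z :=
  Finset.sum_nonneg fun j _ => mul_nonneg (hq j) (sq_nonneg _)

lemma sum_mul_sq_sub_eq_varD_add {n : ℕ} {q : Fin n → ℝ} (hqs : ∑ j, q j = 1)
    (z : Fin n → ℝ) (c : ℝ) :
    ∑ j, q j * (z j - c) ^ 2 = varD q z + (∑ k, q k * z k - c) ^ 2 := by
  set μ := ∑ k, q k * z k with hμ
  have hexpand : ∀ j, q j * (z j - c) ^ 2 =
      q j * (z j - μ) ^ 2 + 2 * (μ - c) * (q j * z j) + ((μ - c) ^ 2 - 2 * (μ - c) * μ) * q j :=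
    fun j => by ring
  simp only [varD, hexpand, Finset.sum_add_distrib, ← Finset.mul_sum, hqs, ← hμ]
  ring

lemma varD_le_sum_mul_sq_sub {n : ℕ} {q : Fin n → ℝ} (hqs : ∑ j, q j = 1)
    (z : Fin n → ℝ) (c : ℝ) :
    varD q z ≤ ∑ j, q j * (z j - c) ^ 2 := by
  rw [sum_mul_sq_sub_eq_varD_add hqs]
  exact le_add_of_nonneg_right (sq_nonneg _)

lemma varD_le_mul_of_le_mul {n : ℕ} {p p' : Fin n → ℝ} {a : ℝ} (hp's : ∑ j, p' j = 1)
    (hle : ∀ j, p' j ≤ a * p j) (z : Fin n → ℝ) :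
    varD p' z ≤ a * varD p z :=
  calc varD p' z ≤ ∑ j, p' j * (z j - ∑ k, p k * z k) ^ 2 := varD_le_sum_mul_sq_sub hp's z _
    _ ≤ ∑ j, a * p j * (z j - ∑ k, p k * z k) ^ 2 :=
        Finset.sum_le_sum fun j _ => mul_le_mul_of_nonneg_right (hle j) (sq_nonneg _)
    _ = a * varD p z := by simp only [varD, Finset.mul_sum, mul_assoc]

lemma one_sub_mul_le_of_le_one_add_mul {x y ζ : ℝ} (hx : 0 ≤ x) (hy : 0 ≤ y)
    (h : x ≤ (1 + ζ) * y) : (1 - ζ) * x ≤ y := by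
  rcases le_or_gt ζ 1 with hζ | hζ
  · calc (1 - ζ) * x ≤ (1 - ζ) * ((1 + ζ) * y) := mul_le_mul_of_nonneg_left h (by linarith)
      _ = y - ζ ^ 2 * y := by ring
      _ ≤ y := sub_le_self _ (by positivity)
  · exact (mul_nonpos_of_nonpos_of_nonneg (by linarith) hx).trans hy

/-- If `q, q' ∈ Δⁿ` have strictly positive entries and are ζ-multiplicatively close
(entrywise `q j / q' j ≤ 1 + ζ` and `q' j / q j ≤ 1 + ζ`), then for any `z`:
`(1 - ζ) Var_q(z) ≤ Var_{q'}(z) ≤ (1 + ζ) Var_q(z)`. -/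
theorem var_mult_close (n : ℕ) (ζ : ℝ) (q q' z : Fin n → ℝ)
    (hq : ∀ j, 0 < q j) (hq' : ∀ j, 0 < q' j)
    (hqs : ∑ j, q j = 1) (hq's : ∑ j, q' j = 1)
    (hclose : ∀ j, q j / q' j ≤ 1 + ζ ∧ q' j / q j ≤ 1 + ζ) :
    (1 - ζ) * varD q z ≤ varD q' z ∧ varD q' z ≤ (1 + ζ) * varD q z := by
  have hq'_le : ∀ j, q' j ≤ (1 + ζ) * q j := fun j => (div_le_iff₀ (hq j)).mp (hclose j).2
  have hq_le : ∀ j, q j ≤ (1 + ζ) * q' j := fun j => (div_le_iff₀ (hq' j)).mp (hclose j).1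
  refine ⟨?_, varD_le_mul_of_le_mul hq's hq'_le z⟩
  exact one_sub_mul_le_of_le_one_add_mul (varD_nonneg (fun j => (hq j).le) z)
    (varD_nonneg (fun j => (hq' j).le) z) (varD_le_mul_of_le_mul hqs hq_le z)
end

section
/- Let n ∈ N, ξ_1,...,ξ_n ≥ 0 with Σ_k ξ_k = 1, and define φ_j(z) = exp(z_j) / (Σ_k ξ_k exp(z_k)). Then for any z ∈ R^n with ‖z‖_∞ ≤ 1/4, it holds that |log φ_j(z)| ≤ 6 ‖z‖_∞. -/
/-!
The denominator `S = ∑ ξ_k exp(z_k)` is a convex combination of numbers in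
`[exp(-‖z‖), exp ‖z‖]`, so `|log S| ≤ ‖z‖`; since `log φ_j(z) = z_j - log S`, this gives
`|log φ_j(z)| ≤ 2 ‖z‖`.
-/

open Finset Real

section WeightedSum

variable {ι : Type*} [Fintype ι] {w f : ι → ℝ} {a b : ℝ}

lemma le_sum_mul_of_forall_le (hw : ∀ k, 0 ≤ w k) (hws : ∑ k, w k = 1) (h : ∀ k, a ≤ f k) :
    a ≤ ∑ k, w k * f k :=
  calc a = ∑ k, w k * a := by rw [← sum_mul, hws, one_mul]
    _ ≤ ∑ k, w k * f k := sum_le_sum fun k _ => mul_le_mul_of_nonneg_left (h k) (hw k)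

lemma sum_mul_le_of_forall_le (hw : ∀ k, 0 ≤ w k) (hws : ∑ k, w k = 1) (h : ∀ k, f k ≤ b) :
    ∑ k, w k * f k ≤ b :=
  calc ∑ k, w k * f k ≤ ∑ k, w k * b :=
        sum_le_sum fun k _ => mul_le_mul_of_nonneg_left (h k) (hw k)
    _ = b := by rw [← sum_mul, hws, one_mul]

lemma abs_apply_le_norm (z : ι → ℝ) (k : ι) : |z k| ≤ ‖z‖ := by
  simpa only [Real.norm_eq_abs] using norm_le_pi_norm z k

lemma exp_neg_norm_le_sum_mul_exp (hw : ∀ k, 0 ≤ w k) (hws : ∑ k, w k = 1) (z : ι → ℝ) :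
    exp (-‖z‖) ≤ ∑ k, w k * exp (z k) :=
  le_sum_mul_of_forall_le hw hws fun k => exp_le_exp.2 (neg_le_of_abs_le (abs_apply_le_norm z k))

lemma sum_mul_exp_le_exp_norm (hw : ∀ k, 0 ≤ w k) (hws : ∑ k, w k = 1) (z : ι → ℝ) :
    ∑ k, w k * exp (z k) ≤ exp ‖z‖ :=
  sum_mul_le_of_forall_le hw hws fun k => exp_le_exp.2 (le_of_abs_le (abs_apply_le_norm z k))

lemma sum_mul_exp_pos (hw : ∀ k, 0 ≤ w k) (hws : ∑ k, w k = 1) (z : ι → ℝ) :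
    0 < ∑ k, w k * exp (z k) :=
  (exp_pos _).trans_le (exp_neg_norm_le_sum_mul_exp hw hws z)

lemma abs_log_sum_mul_exp_le_norm (hw : ∀ k, 0 ≤ w k) (hws : ∑ k, w k = 1) (z : ι → ℝ) :
    |log (∑ k, w k * exp (z k))| ≤ ‖z‖ := by
  have hS := sum_mul_exp_pos hw hws z
  rw [abs_le, le_log_iff_exp_le hS, log_le_iff_le_exp hS]
  exact ⟨exp_neg_norm_le_sum_mul_exp hw hws z, sum_mul_exp_le_exp_norm hw hws z⟩

lemma abs_log_exp_div_sum_mul_exp_le (hw : ∀ k, 0 ≤ w k) (hws : ∑ k, w k = 1) (z : ι → ℝ)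
    (j : ι) : |log (exp (z j) / ∑ k, w k * exp (z k))| ≤ 2 * ‖z‖ := by
  rw [log_div (exp_ne_zero _) (sum_mul_exp_pos hw hws z).ne', log_exp, two_mul]
  exact (abs_sub _ _).trans
    (add_le_add (abs_apply_le_norm z j) (abs_log_sum_mul_exp_le_norm hw hws z))

end WeightedSum

theorem abs_log_softmax_le_general (n : ℕ) (ξ : Fin n → ℝ)
    (hξ : ∀ k, 0 ≤ ξ k) (hξs : ∑ k, ξ k = 1)
    (j : Fin n) (z : Fin n → ℝ) :
    |Real.log (Real.exp (z j) / ∑ k, ξ k * Real.exp (z k))| ≤ 6 * ‖z‖ :=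
  (abs_log_exp_div_sum_mul_exp_le hξ hξs z j).trans
    (mul_le_mul_of_nonneg_right (by norm_num) (norm_nonneg z))

/-- For nonnegative weights `ξ` summing to `1` and
`φ_j(z) = exp(z_j) / ∑_k ξ_k exp(z_k)`, if `‖z‖_∞ ≤ 1/4` then
`|log φ_j(z)| ≤ 6 ‖z‖_∞` (the Pi norm on `Fin n → ℝ` is the sup norm). -/
theorem abs_log_softmax_le (n : ℕ) (ξ : Fin n → ℝ)
    (hξ : ∀ k, 0 ≤ ξ k) (hξs : ∑ k, ξ k = 1)
    (j : Fin n) (z : Fin n → ℝ) (hz : ‖z‖ ≤ 1 / 4) :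
    |Real.log (Real.exp (z j) / ∑ k, ξ k * Real.exp (z k))| ≤ 6 * ‖z‖ :=
  abs_log_softmax_le_general n ξ hξ hξs j z
end

section
/- Every column-stochastic matrix M ∈ R^{n×n} with strictly positive entries has a fixed point in the simplex: there exists x ∈ Δ^n with M x = x, and this x is unique. -/
/-! Since `1ᵀ M = 1ᵀ`, the matrix `M - 1` is singular, so `M` fixes some `v ≠ 0`. For a
nonnegative `M` one has `(M v)⁺ ≤ M v⁺`, and column-stochasticity makes both sides have the same
sum; hence the positive and negative parts of a fixed vector are fixed as well, and a nonzero one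
of them, normalised, is a fixed point in the simplex. If `x ≠ y` are two such fixed points, then
`z = x - y` has sum zero, so `z⁺` and `z⁻` are both nonzero nonnegative fixed vectors; a positive
matrix makes each of them positive in every coordinate, which is absurd. -/

open Matrix

lemma posPart_ne_zero_of_sum_eq_zero {ι R : Type*} [Fintype ι] [AddCommGroup R] [LinearOrder R]
    [IsOrderedAddMonoid R] {z : ι → R} (hz : ∑ i, z i = 0) (hz0 : z ≠ 0) : z⁺ ≠ 0 := by
  intro h
  have hnonpos : ∀ i, z i ≤ 0 := fun i => posPart_eq_zero.1 (congrFun h i)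
  exact hz0 (funext fun i => (Finset.sum_eq_zero_iff_of_nonpos fun i _ => hnonpos i).1 hz i
    (Finset.mem_univ i))

lemma negPart_ne_zero_of_sum_eq_zero {ι R : Type*} [Fintype ι] [AddCommGroup R] [LinearOrder R]
    [IsOrderedAddMonoid R] {z : ι → R} (hz : ∑ i, z i = 0) (hz0 : z ≠ 0) : z⁻ ≠ 0 := by
  rw [← posPart_neg]
  refine posPart_ne_zero_of_sum_eq_zero ?_ (neg_ne_zero.2 hz0)
  simp only [Pi.neg_apply, Finset.sum_neg_distrib, hz, neg_zero]

lemma inv_sum_smul_mem_stdSimplex {ι R : Type*} [Fintype ι] [Field R] [LinearOrder R]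
    [IsStrictOrderedRing R] {w : ι → R} (hw : 0 ≤ w) (hw0 : w ≠ 0) :
    (∑ i, w i)⁻¹ • w ∈ stdSimplex R ι := by
  have hsum : 0 < ∑ i, w i := by
    obtain ⟨j, hj⟩ := Function.ne_iff.1 hw0
    exact Finset.sum_pos' (fun i _ => hw i) ⟨j, Finset.mem_univ j, (hw j).lt_of_ne' hj⟩
  refine ⟨fun i => smul_nonneg (inv_nonneg.2 hsum.le) (hw i), ?_⟩
  simp only [Pi.smul_apply, smul_eq_mul, ← Finset.mul_sum, inv_mul_cancel₀ hsum.ne']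

namespace Matrix

variable {R n : Type*} [Fintype n] [Field R] [LinearOrder R] [IsStrictOrderedRing R]
  {M : Matrix n n R}

lemma posPart_mulVec_le (hM : ∀ i j, 0 ≤ M i j) (v : n → R) : (M *ᵥ v)⁺ ≤ M *ᵥ v⁺ := by
  intro i
  rw [Pi.posPart_apply, posPart_def]
  refine sup_le (Finset.sum_le_sum fun j _ => ?_) (Finset.sum_nonneg fun j _ => ?_)
  · exact mul_le_mul_of_nonneg_left (le_posPart (v j)) (hM i j)
  · exact mul_nonneg (hM i j) (posPart_nonneg (v j))

lemma pos_of_mulVec_eq_self (hpos : ∀ i j, 0 < M i j) {w : n → R} (hw : 0 ≤ w) (hw0 : w ≠ 0)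
    (hMw : M *ᵥ w = w) (i : n) : 0 < w i := by
  obtain ⟨j, hj⟩ := Function.ne_iff.1 hw0
  rw [← hMw]
  refine Finset.sum_pos' (fun k _ => mul_nonneg (hpos i k).le (hw k)) ⟨j, Finset.mem_univ j, ?_⟩
  exact mul_pos (hpos i j) ((hw j).lt_of_ne' hj)

variable [DecidableEq n]

lemma det_sub_one_eq_zero_of_mem_colStochastic [Nonempty n] (hM : M ∈ colStochastic R n) :
    (M - 1).det = 0 :=
  exists_vecMul_eq_zero_iff.mp
    ⟨1, one_ne_zero, by rw [vecMul_sub, one_vecMul_of_mem_colStochastic hM, vecMul_one, sub_self]⟩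

lemma exists_ne_zero_mulVec_eq_self_of_mem_colStochastic [Nonempty n]
    (hM : M ∈ colStochastic R n) : ∃ v ≠ 0, M *ᵥ v = v := by
  obtain ⟨v, hv0, hv⟩ :=
    exists_mulVec_eq_zero_iff.mpr (det_sub_one_eq_zero_of_mem_colStochastic hM)
  exact ⟨v, hv0, by rwa [sub_mulVec, one_mulVec, sub_eq_zero] at hv⟩

lemma mulVec_posPart_eq_self_of_mem_colStochastic (hM : M ∈ colStochastic R n)
    {v : n → R} (hv : M *ᵥ v = v) : M *ᵥ v⁺ = v⁺ := by
  have hle : v⁺ ≤ M *ᵥ v⁺ := by simpa only [hv] using posPart_mulVec_le hM.1 v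
  have hsum : ∑ i, v⁺ i = ∑ i, (M *ᵥ v⁺) i := (sum_mulVec_of_mem_colStochastic hM).symm
  funext i
  exact ((Finset.sum_eq_sum_iff_of_le fun i _ => hle i).1 hsum i (Finset.mem_univ i)).symm

lemma mulVec_negPart_eq_self_of_mem_colStochastic (hM : M ∈ colStochastic R n)
    {v : n → R} (hv : M *ᵥ v = v) : M *ᵥ v⁻ = v⁻ := by
  rw [← posPart_neg]
  exact mulVec_posPart_eq_self_of_mem_colStochastic hM (by rw [mulVec_neg, hv])

lemma exists_mem_stdSimplex_mulVec_eq_self [Nonempty n] (hM : M ∈ colStochastic R n) :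
    ∃ x ∈ stdSimplex R n, M *ᵥ x = x := by
  obtain ⟨v, hv0, hv⟩ := exists_ne_zero_mulVec_eq_self_of_mem_colStochastic hM
  obtain ⟨w, hw, hw0, hMw⟩ : ∃ w : n → R, 0 ≤ w ∧ w ≠ 0 ∧ M *ᵥ w = w := by
    by_cases hvpos : v⁺ = 0
    · refine ⟨v⁻, negPart_nonneg v, fun hneg => hv0 ?_,
        mulVec_negPart_eq_self_of_mem_colStochastic hM hv⟩
      rw [← posPart_sub_negPart v, hvpos, hneg, sub_zero]
    · exact ⟨v⁺, posPart_nonneg v, hvpos, mulVec_posPart_eq_self_of_mem_colStochastic hM hv⟩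
  exact ⟨_, inv_sum_smul_mem_stdSimplex hw hw0, by rw [mulVec_smul, hMw]⟩

lemma eq_of_mem_stdSimplex_of_mulVec_eq_self (hM : M ∈ colStochastic R n)
    (hpos : ∀ i j, 0 < M i j) {x y : n → R} (hx : x ∈ stdSimplex R n) (hy : y ∈ stdSimplex R n)
    (hMx : M *ᵥ x = x) (hMy : M *ᵥ y = y) : x = y := by
  by_contra hxy
  set z := x - y
  have hz0 : z ≠ 0 := sub_ne_zero.2 hxy
  have hz : ∑ i, z i = 0 := by
    simp only [z, Pi.sub_apply, Finset.sum_sub_distrib, hx.2, hy.2, sub_self]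
  have hMz : M *ᵥ z = z := by rw [mulVec_sub, hMx, hMy]
  obtain ⟨i, -⟩ := Function.ne_iff.1 hz0
  have hpos_part := pos_of_mulVec_eq_self hpos (posPart_nonneg z)
    (posPart_ne_zero_of_sum_eq_zero hz hz0)
    (mulVec_posPart_eq_self_of_mem_colStochastic hM hMz) i
  have hneg_part := pos_of_mulVec_eq_self hpos (negPart_nonneg z)
    (negPart_ne_zero_of_sum_eq_zero hz hz0)
    (mulVec_negPart_eq_self_of_mem_colStochastic hM hMz) i
  rw [Pi.posPart_apply, posPart_pos_iff] at hpos_part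
  rw [Pi.negPart_apply, negPart_pos_iff] at hneg_part
  exact lt_asymm hpos_part hneg_part

end Matrix

/-- Every column-stochastic matrix `M` with strictly positive entries has a unique
fixed point in the probability simplex: there is a unique `x ∈ Δⁿ` with `M x = x`. -/
theorem exists_unique_stationary (n : ℕ) (hn : 1 ≤ n)
    (M : Matrix (Fin n) (Fin n) ℝ)
    (hpos : ∀ a b, 0 < M a b) (hcol : ∀ b, ∑ a, M a b = 1) :
    ∃! x : Fin n → ℝ, (∀ i, 0 ≤ x i) ∧ (∑ i, x i = 1) ∧ M.mulVec x = x := by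
  have : Nonempty (Fin n) := ⟨⟨0, hn⟩⟩
  have hM : M ∈ colStochastic ℝ (Fin n) :=
    mem_colStochastic_iff_sum.2 ⟨fun a b => (hpos a b).le, hcol⟩
  obtain ⟨x, hx, hMx⟩ := exists_mem_stdSimplex_mulVec_eq_self hM
  exact ⟨x, ⟨hx.1, hx.2, hMx⟩, fun y ⟨hy0, hy1, hMy⟩ =>
    eq_of_mem_stdSimplex_of_mulVec_eq_self hM hpos ⟨hy0, hy1⟩ hx hMy hMx⟩
end
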